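/- Let G be a connected graph and e = u₁u₂ a cut-edge of G such that both components G₁, G₂ of G \ e have at least 2 vertices. Then cfc(G) ≤ max(cfc(G₁), cfc(G₂)) + 1. -/

import Mathlib

open SimpleGraph

/-- An edge coloring `c` makes `G` conflict-free connected: every two distinct
vertices are joined by a path containing a color used on exactly one of its edges. -/
def IsCFConnColoring {V : Type*} (G : SimpleGraph V) (c : Sym2 V → ℕ) : Prop :=
  ∀ u v : V, u ≠ v → ∃ p : G.Walk u v, p.IsPath ∧
    ∃ col : ℕ, (p.edges.filter (fun e => c e = col)).length = 1

/-- The conflict-free connection number: the minimum number of colors in a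
conflict-free connection coloring. -/
noncomputable def cfcNum {V : Type*} (G : SimpleGraph V) : ℕ :=
  sInf {k | ∃ c : Sym2 V → ℕ, (∀ e, c e < k) ∧ IsCFConnColoring G c}

/-- The independence number: the maximum size of a set of pairwise non-adjacent vertices. -/
noncomputable def indepNum {V : Type*} [Fintype V] (G : SimpleGraph V) : ℕ :=
  sSup {n | ∃ s : Finset V, (↑s : Set V).Pairwise (fun a b => ¬ G.Adj a b) ∧ s.card = n}

/-- The graph obtained from the disjoint union of `G₁` and `G₂` by adding the
cut-edge `u₁u₂`; its two components after deleting this edge are `G₁` and `G₂`. -/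
def joinByEdge {V₁ V₂ : Type*} (G₁ : SimpleGraph V₁) (G₂ : SimpleGraph V₂)
    (u₁ : V₁) (u₂ : V₂) : SimpleGraph (V₁ ⊕ V₂) :=
  SimpleGraph.fromRel (fun a b =>
    (∃ x y, a = Sum.inl x ∧ b = Sum.inl y ∧ G₁.Adj x y) ∨
    (∃ x y, a = Sum.inr x ∧ b = Sum.inr y ∧ G₂.Adj x y) ∨
    (a = Sum.inl u₁ ∧ b = Sum.inr u₂))

/-!
Take conflict-free colorings of `G₁` and `G₂` with fewer than `M = max (cfc G₁) (cfc G₂)`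
colors and give the bridge `u₁u₂` the fresh color `M`. Two vertices on the same side are joined
by their conflict-free path inside that side; a vertex `x` of `G₁` and a vertex `y` of `G₂` are
joined by a path `x ⋯ u₁ u₂ ⋯ y`, on which `M` occurs exactly once.

Such colorings of `G₁` and `G₂` exist as soon as `G` has a conflict-free coloring with finitely
many colors (otherwise `cfcNum G = 0`): a path between two vertices of one side never crosses the
bridge, since it would have to cross back through the same endpoint, so restricting a
coloring of `G` to either side is again conflict-free.
-/

open Function

namespace SimpleGraph

variable {V W : Type*} {G : SimpleGraph V} {H : SimpleGraph W}

def IsCFPath (c : Sym2 V → ℕ) {u v : V} (p : G.Walk u v) : Prop :=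
  p.IsPath ∧ ∃ col : ℕ, (p.edges.filter (fun e => c e = col)).length = 1

lemma isCFPath_copy_iff {c : Sym2 V → ℕ} {u v u' v' : V} (p : G.Walk u v) (hu : u = u')
    (hv : v = v') : IsCFPath c (p.copy hu hv) ↔ IsCFPath c p := by
  subst hu hv; rfl

lemma isCFPath_reverse_iff {c : Sym2 V → ℕ} {u v : V} (p : G.Walk u v) :
    IsCFPath c p.reverse ↔ IsCFPath c p := by
  simp only [IsCFPath, Walk.isPath_reverse_iff, Walk.edges_reverse, List.filter_reverse,
    List.length_reverse]

lemma isCFPath_map_iff {f : G →g H} (hf : Injective f) (c : Sym2 W → ℕ) {u v : V}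
    (p : G.Walk u v) : IsCFPath c (p.map f) ↔ IsCFPath (fun e => c (e.map f)) p := by
  simp only [IsCFPath, Walk.isPath_map_iff_of_injective hf, Walk.edges_map, List.filter_map,
    List.length_map]
  rfl

end SimpleGraph

lemma IsCFConnColoring.comap_iso {V W : Type*} {G : SimpleGraph V} {H : SimpleGraph W}
    (e : G ≃g H) {c : Sym2 W → ℕ} (hc : IsCFConnColoring H c) :
    IsCFConnColoring G (fun x => c (x.map e)) := by
  intro u v huv
  obtain ⟨p, hp⟩ : ∃ p : H.Walk (e u) (e v), IsCFPath c p := hc _ _ (e.injective.ne huv)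
  refine ⟨(p.map e.symm.toHom).copy (e.symm_apply_apply u) (e.symm_apply_apply v),
    (isCFPath_copy_iff _ _ _).2 ((isCFPath_map_iff e.symm.injective _ p).2 ?_)⟩
  simpa [Sym2.map_map] using hp

section cfcNum

variable {V : Type*} {G : SimpleGraph V}

lemma cfcNum_le {c : Sym2 V → ℕ} {k : ℕ} (hk : ∀ e, c e < k) (hc : IsCFConnColoring G c) :
    cfcNum G ≤ k :=
  Nat.sInf_le ⟨c, hk, hc⟩

lemma exists_isCFConnColoring_lt_cfcNum {c : Sym2 V → ℕ} {k : ℕ} (hk : ∀ e, c e < k)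
    (hc : IsCFConnColoring G c) :
    ∃ c' : Sym2 V → ℕ, (∀ e, c' e < cfcNum G) ∧ IsCFConnColoring G c' :=
  Nat.sInf_mem (s := {k | ∃ c : Sym2 V → ℕ, (∀ e, c e < k) ∧ IsCFConnColoring G c})
    ⟨k, c, hk, hc⟩

lemma exists_isCFConnColoring_lt_cfcNum_of_pos (h : 0 < cfcNum G) :
    ∃ c : Sym2 V → ℕ, (∀ e, c e < cfcNum G) ∧ IsCFConnColoring G c :=
  Nat.sInf_mem (Nat.nonempty_of_pos_sInf h)

end cfcNum

namespace joinByEdge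

variable {V₁ V₂ : Type*} {G₁ : SimpleGraph V₁} {G₂ : SimpleGraph V₂} {u₁ : V₁} {u₂ : V₂}

lemma adj_inl_inl {x y : V₁} :
    (joinByEdge G₁ G₂ u₁ u₂).Adj (.inl x) (.inl y) ↔ G₁.Adj x y := by
  simpa [joinByEdge, adj_comm _ y x] using Adj.ne

lemma adj_inr_inr {x y : V₂} :
    (joinByEdge G₁ G₂ u₁ u₂).Adj (.inr x) (.inr y) ↔ G₂.Adj x y := by
  simpa [joinByEdge, adj_comm _ y x] using Adj.ne

lemma adj_inl_inr {x : V₁} {y : V₂} :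
    (joinByEdge G₁ G₂ u₁ u₂).Adj (.inl x) (.inr y) ↔ x = u₁ ∧ y = u₂ := by
  simp [joinByEdge]

lemma adj_inr_inl {x : V₂} {y : V₁} :
    (joinByEdge G₁ G₂ u₁ u₂).Adj (.inr x) (.inl y) ↔ y = u₁ ∧ x = u₂ := by
  rw [adj_comm, adj_inl_inr]

variable (G₁ G₂ u₁ u₂) in
-- `abbrev`, so that the endpoints `inlHom .. x` of mapped walks are reducibly `.inl x`.
abbrev inlHom : G₁ →g joinByEdge G₁ G₂ u₁ u₂ := ⟨Sum.inl, adj_inl_inl.2⟩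

variable (G₁ G₂ u₁ u₂) in
abbrev inrHom : G₂ →g joinByEdge G₁ G₂ u₁ u₂ := ⟨Sum.inr, adj_inr_inr.2⟩

variable (G₁ G₂ u₁ u₂) in
def swapIso : joinByEdge G₂ G₁ u₂ u₁ ≃g joinByEdge G₁ G₂ u₁ u₂ where
  toEquiv := Equiv.sumComm V₂ V₁
  map_rel_iff' := by
    rintro (a | a) (b | b) <;>
      simp [adj_inl_inl, adj_inr_inr, adj_inl_inr, adj_inr_inl, and_comm]

lemma inl_mem_support_of_walk_inr_inl {y : V₂} {x : V₁}
    (p : (joinByEdge G₁ G₂ u₁ u₂).Walk (.inr y) (.inl x)) : .inl u₁ ∈ p.support := by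
  obtain ⟨d, hd, hfst, hsnd⟩ := p.exists_boundary_dart {a | a.isRight} rfl (by simp)
  obtain ⟨⟨a | a, b | b⟩, hab⟩ := d <;> simp at hfst hsnd
  obtain ⟨rfl, -⟩ := adj_inr_inl.1 hab
  exact p.dart_snd_mem_support_of_mem_darts hd

lemma exists_map_inlHom_eq_of_isPath {x y : V₁}
    (p : (joinByEdge G₁ G₂ u₁ u₂).Walk (.inl x) (.inl y)) (hp : p.IsPath) :
    ∃ q : G₁.Walk x y, q.map (inlHom G₁ G₂ u₁ u₂) = p := by
  suffices ∀ {a b} (p : (joinByEdge G₁ G₂ u₁ u₂).Walk a b), p.IsPath → ∀ {x y : V₁}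
      (ha : a = .inl x) (hb : b = .inl y), ∃ q : G₁.Walk x y, q.map (inlHom ..) = p.copy ha hb from
    this p hp rfl rfl
  intro a b p
  induction p with
  | nil => rintro - x y rfl hb; cases Sum.inl_injective hb; exact ⟨.nil, rfl⟩
  | @cons a b c h p ih =>
    rintro hp x y rfl rfl
    rw [Walk.cons_isPath_iff] at hp
    rcases b with x' | z
    · obtain ⟨q, hq⟩ := ih hp.1 rfl rfl
      exact ⟨.cons (adj_inl_inl.1 h) q, congrArg (Walk.cons h) hq⟩
    · obtain ⟨rfl, rfl⟩ := adj_inl_inr.1 h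
      exact (hp.2 (inl_mem_support_of_walk_inr_inl p)).elim

end joinByEdge

section restrict

variable {V₁ V₂ : Type*} {G₁ : SimpleGraph V₁} {G₂ : SimpleGraph V₂} {u₁ : V₁} {u₂ : V₂}
  {c : Sym2 (V₁ ⊕ V₂) → ℕ}

lemma IsCFConnColoring.of_joinByEdge_left (hc : IsCFConnColoring (joinByEdge G₁ G₂ u₁ u₂) c) :
    IsCFConnColoring G₁ (fun e => c (e.map .inl)) := by
  intro x y hxy
  obtain ⟨p, hp⟩ := hc (.inl x) (.inl y) (by simpa using hxy)
  obtain ⟨q, rfl⟩ := joinByEdge.exists_map_inlHom_eq_of_isPath p hp.1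
  exact ⟨q, (isCFPath_map_iff Sum.inl_injective c q).1 hp⟩

lemma IsCFConnColoring.of_joinByEdge_right (hc : IsCFConnColoring (joinByEdge G₁ G₂ u₁ u₂) c) :
    IsCFConnColoring G₂ (fun e => c (e.map .inr)) := by
  have := (hc.comap_iso (joinByEdge.swapIso G₁ G₂ u₁ u₂)).of_joinByEdge_left
  simp only [Sym2.map_map] at this
  exact this

end restrict

section joinColoring

variable {V₁ V₂ : Type*}

def joinColoring (c₁ : Sym2 V₁ → ℕ) (c₂ : Sym2 V₂ → ℕ) (M : ℕ) : Sym2 (V₁ ⊕ V₂) → ℕ :=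
  Sym2.lift ⟨fun a b => match a, b with
    | .inl x, .inl y => c₁ s(x, y)
    | .inr x, .inr y => c₂ s(x, y)
    | _, _ => M, by rintro (x | x) (y | y) <;> simp [Sym2.eq_swap]⟩

variable {c₁ : Sym2 V₁ → ℕ} {c₂ : Sym2 V₂ → ℕ} {M : ℕ}

@[simp] lemma joinColoring_map_inl (e : Sym2 V₁) : joinColoring c₁ c₂ M (e.map .inl) = c₁ e := by
  induction e with | _ x y => rfl

@[simp] lemma joinColoring_map_inr (e : Sym2 V₂) : joinColoring c₁ c₂ M (e.map .inr) = c₂ e := by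
  induction e with | _ x y => rfl

@[simp] lemma joinColoring_inl_inr (x : V₁) (y : V₂) :
    joinColoring c₁ c₂ M s(.inl x, .inr y) = M := rfl

lemma joinColoring_le (h₁ : ∀ e, c₁ e ≤ M) (h₂ : ∀ e, c₂ e ≤ M) (e : Sym2 (V₁ ⊕ V₂)) :
    joinColoring c₁ c₂ M e ≤ M := by
  induction e with
  | _ a b => rcases a with x | x <;> rcases b with y | y <;> simp [joinColoring, h₁, h₂]

variable {G₁ : SimpleGraph V₁} {G₂ : SimpleGraph V₂} {u₁ : V₁} {u₂ : V₂}

lemma exists_isCFPath_inl_inr (h₁ : G₁.Preconnected) (h₂ : G₂.Preconnected)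
    (hM₁ : ∀ e, c₁ e < M) (hM₂ : ∀ e, c₂ e < M) (x : V₁) (y : V₂) :
    ∃ p : (joinByEdge G₁ G₂ u₁ u₂).Walk (.inl x) (.inr y), IsCFPath (joinColoring c₁ c₂ M) p := by
  classical
  obtain ⟨q₁, hq₁⟩ := (h₁ x u₁).some.toPath
  obtain ⟨q₂, hq₂⟩ := (h₂ u₂ y).some.toPath
  refine ⟨(q₁.map (joinByEdge.inlHom ..)).append
    (.cons (joinByEdge.adj_inl_inr.2 ⟨rfl, rfl⟩) (q₂.map (joinByEdge.inrHom ..))), ?_, M, ?_⟩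
  · simp [Walk.isPath_def, Walk.support_append, List.nodup_append,
      hq₁.support_nodup.map Sum.inl_injective, hq₂.support_nodup.map Sum.inr_injective]
  · simp [Walk.edges_append, Walk.edges_map, List.filter_map, Function.comp_def, (hM₁ _).ne,
      (hM₂ _).ne]

lemma isCFConnColoring_joinColoring (h₁ : G₁.Preconnected) (h₂ : G₂.Preconnected)
    (hc₁ : IsCFConnColoring G₁ c₁) (hc₂ : IsCFConnColoring G₂ c₂)
    (hM₁ : ∀ e, c₁ e < M) (hM₂ : ∀ e, c₂ e < M) :
    IsCFConnColoring (joinByEdge G₁ G₂ u₁ u₂) (joinColoring c₁ c₂ M) := by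
  rintro (x | x) (y | y) hxy
  · obtain ⟨p, hp⟩ : ∃ p : G₁.Walk x y, IsCFPath c₁ p := hc₁ x y (by simpa using hxy)
    exact ⟨p.map (joinByEdge.inlHom ..),
      (isCFPath_map_iff Sum.inl_injective _ p).2 (by simpa using hp)⟩
  · exact exists_isCFPath_inl_inr h₁ h₂ hM₁ hM₂ x y
  · obtain ⟨p, hp⟩ := exists_isCFPath_inl_inr h₁ h₂ hM₁ hM₂ (u₁ := u₁) (u₂ := u₂) y x
    exact ⟨p.reverse, (isCFPath_reverse_iff p).2 hp⟩
  · obtain ⟨p, hp⟩ : ∃ p : G₂.Walk x y, IsCFPath c₂ p := hc₂ x y (by simpa using hxy)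
    exact ⟨p.map (joinByEdge.inrHom ..),
      (isCFPath_map_iff Sum.inr_injective _ p).2 (by simpa using hp)⟩

end joinColoring

theorem stmt10 {V₁ V₂ : Type*}
    (G₁ : SimpleGraph V₁) (G₂ : SimpleGraph V₂) (u₁ : V₁) (u₂ : V₂)
    (h₁ : G₁.Connected) (h₂ : G₂.Connected) :
    cfcNum (joinByEdge G₁ G₂ u₁ u₂) ≤ max (cfcNum G₁) (cfcNum G₂) + 1 := by
  obtain hJ | hJ := (cfcNum (joinByEdge G₁ G₂ u₁ u₂)).eq_zero_or_pos
  · simp [hJ]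
  obtain ⟨c, hc_lt, hc⟩ := exists_isCFConnColoring_lt_cfcNum_of_pos hJ
  obtain ⟨c₁, hc₁_lt, hc₁⟩ :=
    exists_isCFConnColoring_lt_cfcNum (fun _ => hc_lt _) hc.of_joinByEdge_left
  obtain ⟨c₂, hc₂_lt, hc₂⟩ :=
    exists_isCFConnColoring_lt_cfcNum (fun _ => hc_lt _) hc.of_joinByEdge_right
  set M := max (cfcNum G₁) (cfcNum G₂)
  have hM₁ : ∀ e, c₁ e < M := fun e => (hc₁_lt e).trans_le (le_max_left _ _)
  have hM₂ : ∀ e, c₂ e < M := fun e => (hc₂_lt e).trans_le (le_max_right _ _)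
  exact cfcNum_le
    (fun e => Nat.lt_succ_of_le (joinColoring_le (fun e => (hM₁ e).le) (fun e => (hM₂ e).le) e))
    (isCFConnColoring_joinColoring h₁.preconnected h₂.preconnected hc₁ hc₂ hM₁ hM₂)
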